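/- Every integer x with 0 ≤ x ≤ H can be written as x = t_p·M_n − t_n·M_p where 0 ≤ t_n < M_n and 0 ≤ t_p ≤ (H + M_n·M_p)/M_n. -/
import Mathlib


theorem stmt_0 (Mp Mn H : ℤ) (hMp : 0 < Mp) (hMn : 0 < Mn)
    (hcop : IsCoprime Mp Mn) (hH : 0 ≤ H) :
    ∀ x : ℤ, 0 ≤ x → x ≤ H →
      ∃ tp tn : ℤ, x = tp * Mn - tn * Mp ∧
        0 ≤ tn ∧ tn < Mn ∧ 0 ≤ tp ∧ tp ≤ (H + Mn * Mp) / Mn := by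
  intro x hx0 hxH
  obtain ⟨a, b, hab⟩ := hcop
  set tn : ℤ := (-x * a) % Mn with htn
  have htn0 : 0 ≤ tn := Int.emod_nonneg _ (ne_of_gt hMn)
  have htnlt : tn < Mn := Int.emod_lt_of_pos _ hMn
  have hdvd : Mn ∣ x + tn * Mp := by
    have hmod : tn ≡ -x * a [ZMOD Mn] := Int.emod_emod_of_dvd _ dvd_rfl
    have h1 : x + tn * Mp ≡ x + (-x * a) * Mp [ZMOD Mn] := (hmod.mul_right Mp).add_left x
    have h2 : x + (-x * a) * Mp = x * (1 - a * Mp) := by ring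
    have h3 : 1 - a * Mp = b * Mn := by linarith
    have h4 : Mn ∣ x + (-x * a) * Mp := by rw [h2, h3]; exact ⟨x * b, by ring⟩
    exact Int.modEq_zero_iff_dvd.mp (h1.trans (Int.modEq_zero_iff_dvd.mpr h4))
  obtain ⟨tp, htp⟩ := hdvd
  refine ⟨tp, tn, by linarith [htp], htn0, htnlt, ?_, ?_⟩
  · have : 0 ≤ Mn * tp := htp ▸ by positivity
    exact nonneg_of_mul_nonneg_right (by linarith [mul_comm Mn tp]) hMn
  · rw [Int.le_ediv_iff_mul_le hMn]
    have h1 : tp * Mn = x + tn * Mp := by linarith [htp, mul_comm Mn tp]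
    nlinarith [htnlt, hx0, hxH, hMp.le]
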